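/- Let H ≤ Γ be countable groups, let H act on a countable set Y, and let Γ ↷ X be the induced action. If K ≤ Γ is an infinite subgroup such that gKg⁻¹ ∩ H is finite for every g ∈ Γ, then the restriction K ↷ X has infinite orbits. -/

import Mathlib

/-- `C` is a Følner sequence for the action of `G` on `X` given by `π`. -/
def IsFolnerSeq {G X : Type*} [Group G] (π : G →* Equiv.Perm X) (C : ℕ → Set X) : Prop :=
  (∀ n, (C n).Finite ∧ (C n).Nonempty) ∧
    ∀ g : G, Filter.Tendsto
      (fun n => ((symmDiff (C n) (π g '' C n)).ncard : ℝ) / (C n).ncard)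
      Filter.atTop (nhds 0)

/-- The action of `G` on `X` given by `π` is amenable (admits a Følner sequence). -/
def IsAmenableAction {G X : Type*} [Group G] (π : G →* Equiv.Perm X) : Prop :=
  ∃ C : ℕ → Set X, IsFolnerSeq π C

/-- The action given by `π` has infinite orbits. -/
def HasInfiniteOrbits {G X : Type*} [Group G] (π : G →* Equiv.Perm X) : Prop :=
  ∀ x : X, {y : X | ∃ g : G, π g x = y}.Infinite

/-- The action given by `π` is transitive. -/
def IsTransitiveAction {G X : Type*} [Group G] (π : G →* Equiv.Perm X) : Prop :=
  ∀ x y : X, ∃ g : G, π g x = y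

/-- The action given by `π` is almost free: every non-trivial element has finitely many
fixed points. -/
def IsAlmostFreeAction {G X : Type*} [Group G] (π : G →* Equiv.Perm X) : Prop :=
  ∀ g : G, g ≠ 1 → {x : X | π g x = x}.Finite

/-- The class 𝒜 of countable groups admitting a faithful, transitive and amenable action
on an infinite countable set. -/
def InClassA (G : Type*) [Group G] : Prop :=
  ∃ (X : Type) (_ : Countable X) (_ : Infinite X) (π : G →* Equiv.Perm X),
    Function.Injective π ∧ IsTransitiveAction π ∧ IsAmenableAction π

/-- The class 𝒜_ℱ of countable groups admitting an amenable, almost free action with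
infinite orbits on a countable set. -/
def InClassAF (G : Type*) [Group G] : Prop :=
  ∃ (X : Type) (_ : Countable X) (π : G →* Equiv.Perm X),
    IsAmenableAction π ∧ IsAlmostFreeAction π ∧ HasInfiniteOrbits π
section InducedAction

variable {Γ : Type*} [Group Γ] (H : Subgroup Γ) {Y : Type*} (π : H →* Equiv.Perm Y)

/-- The equivalence relation on `Y × Γ` given by the diagonal `H`-action
`h • (y, g) = (h • y, h * g)`. -/
def indSetoid : Setoid (Y × Γ) where
  r p q := ∃ h : H, π h p.1 = q.1 ∧ (h : Γ) * p.2 = q.2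
  iseqv := by
    constructor
    · intro p
      exact ⟨1, by simp, by simp⟩
    · rintro p q ⟨h, h1, h2⟩
      refine ⟨h⁻¹, ?_, ?_⟩
      · rw [← h1]; simp
      · rw [← h2]; simp [mul_assoc]
    · rintro p q r ⟨h, h1, h2⟩ ⟨k, k1, k2⟩
      refine ⟨k * h, ?_, ?_⟩
      · rw [← k1, ← h1]; simp
      · rw [← k2, ← h2]; simp [mul_assoc]

/-- The underlying set `X = H \ (Y × Γ)` of the induced action. -/
def IndSpace : Type _ := Quotient (indSetoid H π)

/-- The induced action of `Γ` on `X = H \ (Y × Γ)`, given by `γ • [y, g] = [y, g * γ⁻¹]`. -/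
def indHom : Γ →* Equiv.Perm (IndSpace H π) where
  toFun γ :=
    { toFun := Quotient.map' (fun p => (p.1, p.2 * γ⁻¹))
        (by rintro p q ⟨h, h1, h2⟩; exact ⟨h, h1, by show (h : Γ) * (p.2 * _) = q.2 * _; rw [← h2, mul_assoc]⟩)
      invFun := Quotient.map' (fun p => (p.1, p.2 * γ))
        (by rintro p q ⟨h, h1, h2⟩; exact ⟨h, h1, by show (h : Γ) * (p.2 * _) = q.2 * _; rw [← h2, mul_assoc]⟩)
      left_inv := by
        intro x
        induction x using Quotient.inductionOn' with
        | h p => simp [Quotient.map'_mk'', mul_assoc]; rfl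
      right_inv := by
        intro x
        induction x using Quotient.inductionOn' with
        | h p => simp [Quotient.map'_mk'', mul_assoc]; rfl }
  map_one' := by
    apply Equiv.ext
    intro x
    induction x using Quotient.inductionOn' with
    | h p => show Quotient.mk'' (p.1, p.2 * 1⁻¹) = Quotient.mk'' p; simp
  map_mul' γ₁ γ₂ := by
    apply Equiv.ext
    intro x
    induction x using Quotient.inductionOn' with
    | h p =>
      show Quotient.mk'' (p.1, p.2 * (γ₁ * γ₂)⁻¹) = Quotient.mk'' ((p.1, p.2 * γ₂⁻¹).1, (p.1, p.2 * γ₂⁻¹).2 * γ₁⁻¹)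
      simp [mul_assoc]

end InducedAction

/- A point of `H \ (Y × Γ)` is fixed by `γ` only if `γ` lies in a conjugate of `H`; so when `K`
meets every conjugate of `H` finitely, every point has a finite stabilizer in the infinite group
`K`, and its `K`-orbit, a union of finitely many translates of that stabilizer if it were
finite, must be infinite. -/

theorem infinite_orbit_of_finite_stabilizer {G X : Type*} [Group G] [Infinite G]
    (ρ : G →* Equiv.Perm X) (x : X) (hstab : {g : G | ρ g x = x}.Finite) :
    {y : X | ∃ g : G, ρ g x = y}.Infinite := by
  intro horbit
  have hfiber : ∀ y ∈ {y : X | ∃ g : G, ρ g x = y}, ((fun g : G => ρ g x) ⁻¹' {y}).Finite := by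
    rintro _ ⟨g₀, rfl⟩
    refine (hstab.preimage (mul_right_injective g₀⁻¹).injOn).subset fun g hg => ?_
    simp only [Set.mem_preimage, Set.mem_singleton_iff] at hg
    simp [hg]
  have huniv : (Set.univ : Set G).Finite :=
    (horbit.preimage' hfiber).subset fun g _ => ⟨g, rfl⟩
  exact Set.infinite_univ huniv

theorem hasInfiniteOrbits_of_finite_stabilizers {G X : Type*} [Group G] [Infinite G]
    (ρ : G →* Equiv.Perm X) (hstab : ∀ x : X, {g : G | ρ g x = x}.Finite) :
    HasInfiniteOrbits ρ :=
  fun x => infinite_orbit_of_finite_stabilizer ρ x (hstab x)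

theorem conj_mem_of_indHom_apply_mk_eq {Γ Y : Type*} [Group Γ] {H : Subgroup Γ}
    {π : H →* Equiv.Perm Y} {γ g : Γ} {y : Y}
    (hfix : indHom H π γ (Quotient.mk'' (y, g)) = Quotient.mk'' (y, g)) :
    g * γ * g⁻¹ ∈ H := by
  obtain ⟨h, -, hh⟩ := Quotient.exact' hfix
  have hh' : (h : Γ) * (g * γ⁻¹) = g := hh
  have hconj : (h : Γ) = g * γ * g⁻¹ := by rw [eq_mul_inv_of_mul_eq hh']; group
  exact hconj ▸ h.2

theorem induced_action_infinite_orbits_of_finite_intersections_general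
    {Γ Y : Type*} [Group Γ]
    (H : Subgroup Γ) (π : H →* Equiv.Perm Y)
    (K : Subgroup Γ) [Infinite K]
    (hK : ∀ g : Γ, {x : Γ | x ∈ H ∧ g⁻¹ * x * g ∈ K}.Finite) :
    HasInfiniteOrbits ((indHom H π).comp K.subtype) := by
  refine hasInfiniteOrbits_of_finite_stabilizers _ fun x => ?_
  induction x using Quotient.inductionOn' with
  | h p =>
    obtain ⟨y, g⟩ := p
    have hconj_inj : Function.Injective fun k : K => g * (k : Γ) * g⁻¹ := fun a b hab =>
      Subtype.ext (by simpa using hab)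
    refine ((hK g).preimage hconj_inj.injOn).subset fun k hk => ?_
    exact ⟨conj_mem_of_indHom_apply_mk_eq hk, by simp [mul_assoc]⟩

/-- **Lemma 2.5 (4).**  Let `H ≤ Γ` be countable groups, `H ↷ Y` an action on a countable
set and `Γ ↷ X` the induced action.  If `K ≤ Γ` is an infinite subgroup such that
`gKg⁻¹ ∩ H` is finite for every `g ∈ Γ`, then the restriction `K ↷ X` has infinite
orbits. -/
theorem induced_action_infinite_orbits_of_finite_intersections
    {Γ Y : Type*} [Group Γ] [Countable Γ] [Countable Y]
    (H : Subgroup Γ) (π : H →* Equiv.Perm Y)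
    (K : Subgroup Γ) [Infinite K]
    (hK : ∀ g : Γ, {x : Γ | x ∈ H ∧ g⁻¹ * x * g ∈ K}.Finite) :
    HasInfiniteOrbits ((indHom H π).comp K.subtype) :=
  induced_action_infinite_orbits_of_finite_intersections_general H π K hK
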